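/- Let U ⊆ ℂ be open with z·(z−1)·(z+8) ≠ 0 for all z ∈ U. Let x : ℂ → ℂ be three times differentiable on U and satisfy (x(z)+1)³ = (z+2)³/((z+8)(z−1)²) for all z ∈ U, with x(z)·(x(z)²+3x(z)+3) ≠ 0 for all z ∈ U. Let V ⊆ ℂ be open with x(U) ⊆ V, let ψ solve ψ'' = Q₂·ψ on V, and let g : ℂ → ℂ be twice differentiable and nonvanishing on U with g(z)² = x'(z) for all z ∈ U. Then Φ(z) := ψ(x(z))/g(z) solves Φ'' = Q₃·Φ on U. -/

import Mathlib

/-!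
If `x' = g²`, then `ψ ∘ x / g` solves `Φ'' = R Φ` with
`R = Q₂(x) g⁴ - g''/g + 2 (g'/g)²`, which is `Q₂(x) x'² - ½ {x, z}` with the Schwarzian
`{x, z}` written through `g` (Liouville's transformation). It remains to see `R = Q₃`.

Put `P = (z + 2)(z + 8)(z - 1)`. Implicit differentiation of the curve gives `x' P = -18 (x + 1)`,
hence the linear equation `2 P g' + (P' + 18) g = 0`, so `g'/g` and `g''/g` are rational in `z`.
Moreover `Q₂(x) (x + 1)²` only depends on `u = (x + 1)³`, and on the curve
`u - 1 = 27 z / ((z + 8)(z - 1)²)`; so `R` is a rational function of `z`, and it equals `Q₃`.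
At `z = -2` these relations degenerate (`P = 0`), and `R = Q₃` there follows by continuity.
-/

open Complex

/-- `f` solves the equation `ψ'' = Q·ψ` on the open set `U`. -/
def SolvesOn (Q f : ℂ → ℂ) (U : Set ℂ) : Prop :=
  (∀ x ∈ U, DifferentiableAt ℂ f x) ∧ (∀ x ∈ U, DifferentiableAt ℂ (deriv f) x) ∧
    ∀ x ∈ U, deriv (deriv f) x = Q x * f x

/-- The coefficient of the normal form (2') of the second Chudnovsky equation. -/
noncomputable def Q₂ (x : ℂ) : ℂ :=
  -(1 / 4) * ((x + 1) * (x + 3) * (x ^ 2 + 3)) / (x ^ 2 * (x ^ 2 + 3 * x + 3) ^ 2)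

/-- The coefficient of the normal form (3') of the third Chudnovsky equation. -/
noncomputable def Q₃ (x : ℂ) : ℂ :=
  -(1 / 4) * (x ^ 4 + 8 * x ^ 3 + 72 * x ^ 2 - 64 * x + 64)
    / (x ^ 2 * (x - 1) ^ 2 * (x + 8) ^ 2)

open Filter Topology

theorem Set.EqOn.of_diff_singleton {X Y : Type*} [TopologicalSpace X] [TopologicalSpace Y]
    [T2Space Y] [∀ x : X, (𝓝[≠] x).NeBot] {f₁ f₂ : X → Y} {U : Set X} {c : X} (hU : IsOpen U)
    (h₁ : ContinuousOn f₁ U) (h₂ : ContinuousOn f₂ U) (h : EqOn f₁ f₂ (U \ {c})) :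
    EqOn f₁ f₂ U := by
  intro z hz
  by_cases hzc : z = c
  · subst hzc
    have hnhds := hU.mem_nhds hz
    refine (((h₁.continuousAt hnhds).eventuallyEq_nhds_iff_eventuallyEq_nhdsNE
      (h₂.continuousAt hnhds)).1 ?_).eq_of_nhds
    filter_upwards [self_mem_nhdsWithin, mem_nhdsWithin_of_mem_nhds hnhds] with w hwz hwU
      using h ⟨hwU, hwz⟩
  · exact h ⟨hz, hzc⟩

theorem SolvesOn.congr {Q Q' f : ℂ → ℂ} {U : Set ℂ} (h : SolvesOn Q f U)
    (hQ : Set.EqOn Q Q' U) : SolvesOn Q' f U :=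
  ⟨h.1, h.2.1, fun z hz => by rw [h.2.2 z hz, hQ hz]⟩

theorem SolvesOn.comp_div {Q ψ x g : ℂ → ℂ} {U V : Set ℂ} (hψ : SolvesOn Q ψ V) (hU : IsOpen U)
    (hxV : ∀ z ∈ U, x z ∈ V) (hx : ∀ z ∈ U, HasDerivAt x (g z ^ 2) z)
    (hg : DifferentiableOn ℂ g U) (hgne : ∀ z ∈ U, g z ≠ 0) :
    SolvesOn (fun z => Q (x z) * g z ^ 4 - deriv (deriv g) z / g z + 2 * (deriv g z / g z) ^ 2)
      (fun z => ψ (x z) / g z) U := by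
  obtain ⟨hψ₁, hψ₂, hψ₃⟩ := hψ
  have hg₁ : ∀ z ∈ U, HasDerivAt g (deriv g z) z := fun z hz =>
    (hg.differentiableAt (hU.mem_nhds hz)).hasDerivAt
  have hg₂ : ∀ z ∈ U, HasDerivAt (deriv g) (deriv (deriv g) z) z := fun z hz =>
    ((hg.deriv hU).differentiableAt (hU.mem_nhds hz)).hasDerivAt
  have hΦ₁ : ∀ z ∈ U, HasDerivAt (fun z => ψ (x z) / g z)
      (deriv ψ (x z) * g z - ψ (x z) * deriv g z / g z ^ 2) z := by
    intro z hz
    refine (((hψ₁ _ (hxV z hz)).hasDerivAt.comp z (hx z hz)).fun_div (hg₁ z hz)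
      (hgne z hz)).congr_deriv ?_
    simp only [Function.comp_apply]
    field_simp [hgne z hz]
  have hΦ₂ : ∀ z ∈ U, HasDerivAt (fun z => deriv ψ (x z) * g z - ψ (x z) * deriv g z / g z ^ 2)
      ((Q (x z) * g z ^ 4 - deriv (deriv g) z / g z + 2 * (deriv g z / g z) ^ 2)
        * (ψ (x z) / g z)) z := by
    intro z hz
    have hψ' : HasDerivAt (deriv ψ) (Q (x z) * ψ (x z)) (x z) := by
      rw [← hψ₃ _ (hxV z hz)]; exact (hψ₂ _ (hxV z hz)).hasDerivAt
    refine (((hψ'.comp z (hx z hz)).fun_mul (hg₁ z hz)).fun_sub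
      ((((hψ₁ _ (hxV z hz)).hasDerivAt.comp z (hx z hz)).fun_mul (hg₂ z hz)).fun_div
        ((hg₁ z hz).fun_pow 2) (pow_ne_zero 2 (hgne z hz)))).congr_deriv ?_
    simp only [Function.comp_apply]
    field_simp [hgne z hz]
    ring
  have hderiv : ∀ z ∈ U, deriv (fun z => ψ (x z) / g z) =ᶠ[𝓝 z]
      fun z => deriv ψ (x z) * g z - ψ (x z) * deriv g z / g z ^ 2 := fun z hz =>
    eventuallyEq_of_mem (hU.mem_nhds hz) fun w hw => (hΦ₁ w hw).deriv
  refine ⟨fun z hz => (hΦ₁ z hz).differentiableAt, fun z hz => ?_, fun z hz => ?_⟩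
  · exact ((hΦ₂ z hz).congr_of_eventuallyEq (hderiv z hz)).differentiableAt
  · exact ((hΦ₂ z hz).congr_of_eventuallyEq (hderiv z hz)).deriv

theorem continuousAt_Q₂ {a : ℂ} (ha : a * (a ^ 2 + 3 * a + 3) ≠ 0) : ContinuousAt Q₂ a :=
  ContinuousAt.div (by fun_prop) (by fun_prop) (by rw [← mul_pow]; simpa using ha)

theorem continuousAt_Q₃ {z : ℂ} (hz : z * (z - 1) * (z + 8) ≠ 0) : ContinuousAt Q₃ z :=
  ContinuousAt.div (by fun_prop) (by fun_prop) (by rw [← mul_pow, ← mul_pow]; simpa using hz)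

theorem Q₂_mul_add_one_sq (a : ℂ) :
    Q₂ a * (a + 1) ^ 2 = -(1 / 4) * ((a + 1) ^ 3 * ((a + 1) ^ 3 + 8)) / ((a + 1) ^ 3 - 1) ^ 2 := by
  rw [show (a + 1) ^ 3 - 1 = a * (a ^ 2 + 3 * a + 3) by ring, Q₂]
  field_simp
  ring

theorem potential_eq_Q₃ {z a G G₁ G₂ : ℂ} (hz : z * (z - 1) * (z + 8) ≠ 0) (hz₂ : z + 2 ≠ 0)
    (hG : G ≠ 0) (hcurve : (a + 1) ^ 3 * ((z + 8) * (z - 1) ^ 2) = (z + 2) ^ 3)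
    (h₀ : G ^ 2 * ((z + 2) * (z + 8) * (z - 1)) = -18 * (a + 1))
    (h₁ : 2 * ((z + 2) * (z + 8) * (z - 1)) * G₁ + (3 * z ^ 2 + 18 * z + 24) * G = 0)
    (h₂ : 2 * ((z + 2) * (z + 8) * (z - 1)) * G₂ + (9 * z ^ 2 + 54 * z + 36) * G₁
      + (6 * z + 18) * G = 0) :
    Q₂ a * G ^ 4 - G₂ / G + 2 * (G₁ / G) ^ 2 = Q₃ z := by
  have hz₀ : z ≠ 0 := left_ne_zero_of_mul (left_ne_zero_of_mul hz)
  have hz₁ : z - 1 ≠ 0 := right_ne_zero_of_mul (left_ne_zero_of_mul hz)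
  have hz₈ : z + 8 ≠ 0 := right_ne_zero_of_mul hz
  have hP : (z + 2) * (z + 8) * (z - 1) ≠ 0 := by simp [*]
  have hq : (z + 8) * (z - 1) ^ 2 ≠ 0 := by simp [*]
  have hu : (a + 1) ^ 3 = (z + 2) ^ 3 / ((z + 8) * (z - 1) ^ 2) := by
    rw [eq_div_iff hq, hcurve]
  have hQ₂ : Q₂ a * G ^ 4 = 324 * (Q₂ a * (a + 1) ^ 2) / ((z + 2) * (z + 8) * (z - 1)) ^ 2 := by
    rw [eq_div_iff (pow_ne_zero 2 hP)]
    linear_combination Q₂ a * (G ^ 2 * ((z + 2) * (z + 8) * (z - 1)) - 18 * (a + 1)) * h₀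
  have hG₁ : G₁ / G = -(3 * z ^ 2 + 18 * z + 24) / (2 * ((z + 2) * (z + 8) * (z - 1))) := by
    rw [div_eq_div_iff hG (by simp [hP])]; linear_combination h₁
  have hG₂ : G₂ / G = -((9 * z ^ 2 + 54 * z + 36) * (G₁ / G) + (6 * z + 18))
      / (2 * ((z + 2) * (z + 8) * (z - 1))) := by
    field_simp; linear_combination h₂
  have hu₁ : (a + 1) ^ 3 - 1 = 27 * z / ((z + 8) * (z - 1) ^ 2) := by
    rw [hu]; field_simp; ring
  rw [hQ₂, hG₂, hG₁, Q₂_mul_add_one_sq, hu₁, hu, Q₃]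
  field_simp
  ring

section Curve

variable {U : Set ℂ} {x g : ℂ → ℂ}

theorem deriv_mul_eq_of_curve {x' : ℂ → ℂ} (hU : IsOpen U)
    (hq : ∀ z ∈ U, (z + 8) * (z - 1) ^ 2 ≠ 0) (hx : ∀ z ∈ U, HasDerivAt x (x' z) z)
    (hcurve : ∀ z ∈ U, (x z + 1) ^ 3 * ((z + 8) * (z - 1) ^ 2) = (z + 2) ^ 3) :
    ∀ z ∈ U, x' z * ((z + 2) * (z + 8) * (z - 1)) = -18 * (x z + 1) := by
  intro z hz
  have hid : HasDerivAt (fun t : ℂ => t) 1 z := hasDerivAt_id' z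
  have hdiff : 3 * (x z + 1) ^ 2 * x' z * ((z + 8) * (z - 1) ^ 2)
      + (x z + 1) ^ 3 * (3 * z ^ 2 + 12 * z - 15) = 3 * (z + 2) ^ 2 := by
    have hL : HasDerivAt (fun t => (x t + 1) ^ 3 * ((t + 8) * (t - 1) ^ 2)) _ z :=
      (((hx z hz).add_const 1).fun_pow 3).fun_mul
        ((hid.add_const 8).fun_mul ((hid.sub_const 1).fun_pow 2))
    have hR : HasDerivAt (fun t => (t + 2) ^ 3) _ z := (hid.add_const 2).fun_pow 3
    have := hL.unique (hR.congr_of_eventuallyEq (eventuallyEq_of_mem (hU.mem_nhds hz) hcurve))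
    linear_combination this
  by_cases hz₂ : z + 2 = 0
  · have hA : x z + 1 = 0 := by
      have := hcurve z hz
      rw [hz₂, zero_pow three_ne_zero, mul_eq_zero] at this
      exact pow_eq_zero_iff three_ne_zero |>.1 (this.resolve_right (hq z hz))
    rw [hA, hz₂]
    ring
  · refine mul_right_cancel₀ (pow_ne_zero 3 hz₂) ?_
    linear_combination ((z + 8) * (z - 1)) * (((x z + 1) * (z + 2) / 3) * hdiff
      - (x' z * (z + 2) + (x z + 1)) * hcurve z hz) - 18 * (x z + 1) * hcurve z hz

theorem sqrt_deriv_ode_of_curve (hU : IsOpen U) (hg : DifferentiableOn ℂ g U)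
    (hgne : ∀ z ∈ U, g z ≠ 0) (hx : ∀ z ∈ U, HasDerivAt x (g z ^ 2) z)
    (h : ∀ z ∈ U, g z ^ 2 * ((z + 2) * (z + 8) * (z - 1)) = -18 * (x z + 1)) :
    ∀ z ∈ U, 2 * ((z + 2) * (z + 8) * (z - 1)) * deriv g z
      + (3 * z ^ 2 + 18 * z + 24) * g z = 0 := by
  intro z hz
  have hid : HasDerivAt (fun t : ℂ => t) 1 z := hasDerivAt_id' z
  have hL : HasDerivAt (fun t => g t ^ 2 * ((t + 2) * (t + 8) * (t - 1))) _ z :=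
    ((hg.differentiableAt (hU.mem_nhds hz)).hasDerivAt.fun_pow 2).fun_mul
      (((hid.add_const 2).fun_mul (hid.add_const 8)).fun_mul (hid.sub_const 1))
  have hR : HasDerivAt (fun t => -18 * (x t + 1)) _ z := ((hx z hz).add_const 1).const_mul (-18)
  have := hL.unique (hR.congr_of_eventuallyEq (eventuallyEq_of_mem (hU.mem_nhds hz) h))
  refine mul_left_cancel₀ (hgne z hz) ?_
  linear_combination this

theorem sqrt_deriv_ode_deriv (hU : IsOpen U) (hg : DifferentiableOn ℂ g U)
    (h : ∀ z ∈ U, 2 * ((z + 2) * (z + 8) * (z - 1)) * deriv g z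
      + (3 * z ^ 2 + 18 * z + 24) * g z = 0) :
    ∀ z ∈ U, 2 * ((z + 2) * (z + 8) * (z - 1)) * deriv (deriv g) z
      + (9 * z ^ 2 + 54 * z + 36) * deriv g z + (6 * z + 18) * g z = 0 := by
  intro z hz
  have hid : HasDerivAt (fun t : ℂ => t) 1 z := hasDerivAt_id' z
  have hP : HasDerivAt (fun t => 2 * ((t + 2) * (t + 8) * (t - 1))) _ z :=
    (((hid.add_const 2).fun_mul (hid.add_const 8)).fun_mul (hid.sub_const 1)).const_mul 2
  have hP' : HasDerivAt (fun t => 3 * t ^ 2 + 18 * t + 24) _ z :=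
    (((hid.fun_pow 2).const_mul 3).fun_add (hid.const_mul 18)).add_const 24
  have hL := (hP.fun_mul ((hg.deriv hU).differentiableAt (hU.mem_nhds hz)).hasDerivAt).fun_add
    (hP'.fun_mul (hg.differentiableAt (hU.mem_nhds hz)).hasDerivAt)
  have := hL.unique ((hasDerivAt_const z (0 : ℂ)).congr_of_eventuallyEq
    (eventuallyEq_of_mem (hU.mem_nhds hz) h))
  linear_combination this

end Curve

theorem chudnovsky_three_two_rational_equivalence_general
    (U V : Set ℂ) (hU : IsOpen U)
    (hUne : ∀ z ∈ U, z * (z - 1) * (z + 8) ≠ 0)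
    (x g ψ : ℂ → ℂ)
    (hx1 : ∀ z ∈ U, DifferentiableAt ℂ x z)
    (hcurve : ∀ z ∈ U, (x z + 1) ^ 3 = (z + 2) ^ 3 / ((z + 8) * (z - 1) ^ 2))
    (hxne : ∀ z ∈ U, x z * (x z ^ 2 + 3 * x z + 3) ≠ 0)
    (hxV : ∀ z ∈ U, x z ∈ V)
    (hψ : SolvesOn Q₂ ψ V)
    (hg1 : ∀ z ∈ U, DifferentiableAt ℂ g z)
    (hgne : ∀ z ∈ U, g z ≠ 0)
    (hgsq : ∀ z ∈ U, g z ^ 2 = deriv x z) :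
    SolvesOn Q₃ (fun z => ψ (x z) / g z) U := by
  have hg : DifferentiableOn ℂ g U := fun z hz => (hg1 z hz).differentiableWithinAt
  have hx : ∀ z ∈ U, HasDerivAt x (g z ^ 2) z := fun z hz => hgsq z hz ▸ (hx1 z hz).hasDerivAt
  have hq : ∀ z ∈ U, (z + 8) * (z - 1) ^ 2 ≠ 0 := fun z hz => by
    have := hUne z hz
    simp_all
  have hcurve' : ∀ z ∈ U, (x z + 1) ^ 3 * ((z + 8) * (z - 1) ^ 2) = (z + 2) ^ 3 := fun z hz => by
    rw [hcurve z hz, div_mul_cancel₀ _ (hq z hz)]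
  have h₀ := deriv_mul_eq_of_curve hU hq hx hcurve'
  have h₁ := sqrt_deriv_ode_of_curve hU hg hgne hx h₀
  have h₂ := sqrt_deriv_ode_deriv hU hg h₁
  refine (hψ.comp_div hU hxV hx hg hgne).congr (Set.EqOn.of_diff_singleton (c := -2) hU ?_ ?_ ?_)
  · have hg₁ := (hg.deriv hU).continuousOn
    have hg₂ := ((hg.deriv hU).deriv hU).continuousOn
    have hQ : ContinuousOn (fun z => Q₂ (x z)) U := fun z hz =>
      ((continuousAt_Q₂ (hxne z hz)).comp (hx1 z hz).continuousAt).continuousWithinAt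
    have hg₀ := hg.continuousOn
    fun_prop (disch := exact hgne)
  · exact fun z hz => (continuousAt_Q₃ (hUne z hz)).continuousWithinAt
  · rintro z ⟨hz, hz₂⟩
    exact potential_eq_Q₃ (hUne z hz) (fun h => hz₂ (eq_neg_of_add_eq_zero_left h)) (hgne z hz)
      (hcurve' z hz) (h₀ z hz) (h₁ z hz) (h₂ z hz)

theorem chudnovsky_three_two_rational_equivalence
    (U V : Set ℂ) (hU : IsOpen U) (hV : IsOpen V)
    (hUne : ∀ z ∈ U, z * (z - 1) * (z + 8) ≠ 0)
    (x g ψ : ℂ → ℂ)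
    (hx1 : ∀ z ∈ U, DifferentiableAt ℂ x z)
    (hx2 : ∀ z ∈ U, DifferentiableAt ℂ (deriv x) z)
    (hx3 : ∀ z ∈ U, DifferentiableAt ℂ (deriv (deriv x)) z)
    (hcurve : ∀ z ∈ U, (x z + 1) ^ 3 = (z + 2) ^ 3 / ((z + 8) * (z - 1) ^ 2))
    (hxne : ∀ z ∈ U, x z * (x z ^ 2 + 3 * x z + 3) ≠ 0)
    (hxV : ∀ z ∈ U, x z ∈ V)
    (hψ : SolvesOn Q₂ ψ V)
    (hg1 : ∀ z ∈ U, DifferentiableAt ℂ g z)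
    (hg2 : ∀ z ∈ U, DifferentiableAt ℂ (deriv g) z)
    (hgne : ∀ z ∈ U, g z ≠ 0)
    (hgsq : ∀ z ∈ U, g z ^ 2 = deriv x z) :
    SolvesOn Q₃ (fun z => ψ (x z) / g z) U :=
  chudnovsky_three_two_rational_equivalence_general U V hU hUne x g ψ hx1 hcurve hxne hxV hψ hg1
    hgne hgsq
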